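/- Let G₁ be the graph on Cantor space 2^ω in which distinct x, y are adjacent iff x(n) = y(n) for all but finitely many n. Then every subset A ⊆ 2^ω that has the Baire property and is G₁-independent is meagre. Consequently, G₁ admits no proper coloring with countably many colors in which every color class has the Baire property; in particular its Borel chromatic number is uncountable. -/

import Mathlib

/-!
A set `A` with the Baire property that is not meagre is comeagre in some basic cylinder
`N = PiNat.cylinder x n`. Flipping coordinate `n` is a homeomorphism of Cantor space mapping `N`
into itself, so `A` and its preimage under the flip are both comeagre in `N` and therefore share
a point `y`. Then `y` and its flip are two `G₁`-adjacent points of `A`. For a countable colouring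
with Baire-measurable classes, the Baire category theorem makes some class non-meagre.
-/

open MeasureTheory

/-- Adjacency in the graph `G₁` on Cantor space: distinct sequences are
adjacent iff they differ in only finitely many coordinates. -/
def G1Adj (x y : ℕ → Bool) : Prop :=
  x ≠ y ∧ {n | x n ≠ y n}.Finite

open Topology Filter Set Function

section Baire

variable {X : Type*} [TopologicalSpace X]

theorem BaireMeasurableSet.exists_nonempty_isOpen_eventually_mem {A : Set X}
    (hA : BaireMeasurableSet A) (hA' : ¬IsMeagre A) :
    ∃ U, IsOpen U ∧ U.Nonempty ∧ ∀ᶠ x in residual X, x ∈ U → x ∈ A := by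
  obtain ⟨U, hU, hAU⟩ := hA.residualEq_isOpen
  refine ⟨U, hU, nonempty_iff_ne_empty.2 fun hU₀ => hA' ?_, ?_⟩
  · subst hU₀
    filter_upwards [hAU] with x hx using hx.to_iff.1
  · filter_upwards [hAU] with x hx using hx.to_iff.2

variable [BaireSpace X]

theorem isMeagre_of_independent_of_exists_homeomorph {r : X → X → Prop} {A : Set X}
    (hA : BaireMeasurableSet A) (hind : ∀ x ∈ A, ∀ y ∈ A, ¬r x y)
    (hloc : ∀ U, IsOpen U → U.Nonempty →
      ∃ V ⊆ U, IsOpen V ∧ V.Nonempty ∧ ∃ f : X ≃ₜ X, MapsTo f V V ∧ ∀ x, r x (f x)) :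
    IsMeagre A := by
  by_contra hA'
  obtain ⟨U, hU, hUne, hUA⟩ := hA.exists_nonempty_isOpen_eventually_mem hA'
  obtain ⟨V, hVU, hV, hVne, f, hfV, hfr⟩ := hloc U hU hUne
  have hfUA : ∀ᶠ x in residual X, f x ∈ U → f x ∈ A := by
    rw [← f.residual_map_eq] at hUA
    exact hUA
  obtain ⟨x, ⟨hxA, hfxA⟩, hxV⟩ :=
    (dense_of_mem_residual (hUA.and hfUA)).exists_mem_open hV hVne
  exact hind x (hxA (hVU hxV)) (f x) (hfxA (hVU (hfV hxV))) (hfr x)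

theorem exists_not_isMeagre_preimage_singleton [Nonempty X] {ι : Type*} [Countable ι]
    (c : X → ι) : ∃ i, ¬IsMeagre (c ⁻¹' {i}) := by
  by_contra! h
  refine not_isMeagre_of_isOpen (X := X) isOpen_univ univ_nonempty ?_
  simpa [← preimage_iUnion, iUnion_of_singleton] using isMeagre_iUnion h

end Baire

theorem continuous_update_not (n : ℕ) : Continuous fun x : ℕ → Bool => update x n (!x n) :=
  continuous_id.update n ((continuous_of_discreteTopology (f := not)).comp (continuous_apply n))

def flipAt (n : ℕ) : (ℕ → Bool) ≃ₜ (ℕ → Bool) where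
  toFun x := update x n (!x n)
  invFun x := update x n (!x n)
  left_inv x := by simp
  right_inv x := by simp
  continuous_toFun := continuous_update_not n
  continuous_invFun := continuous_update_not n

theorem flipAt_apply (n : ℕ) (x : ℕ → Bool) : flipAt n x = update x n (!x n) := rfl

theorem G1Adj_flipAt (n : ℕ) (x : ℕ → Bool) : G1Adj x (flipAt n x) := by
  have hdiff : {i | x i ≠ flipAt n x i} = {n} := by
    ext i
    rcases eq_or_ne i n with rfl | hi <;> simp [flipAt_apply, *]
  refine ⟨fun h => ?_, hdiff ▸ finite_singleton n⟩
  simpa [flipAt_apply] using congrFun h n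

theorem mapsTo_flipAt_cylinder (x : ℕ → Bool) (n : ℕ) :
    MapsTo (flipAt n) (PiNat.cylinder x n) (PiNat.cylinder x n) := fun y hy => by
  rw [← PiNat.mem_cylinder_iff_eq.1 hy]
  exact PiNat.update_mem_cylinder y n _

theorem exists_cylinder_subset {U : Set (ℕ → Bool)} (hU : IsOpen U) (hne : U.Nonempty) :
    ∃ x n, PiNat.cylinder x n ⊆ U := by
  obtain ⟨a, ha⟩ := hne
  obtain ⟨_, ⟨x, n, rfl⟩, -, hsub⟩ :=
    (PiNat.isTopologicalBasis_cylinders fun _ => Bool).exists_subset_of_mem_open ha hU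
  exact ⟨x, n, hsub⟩

theorem G1_isMeagre_of_independent {A : Set (ℕ → Bool)} (hA : BaireMeasurableSet A)
    (hind : ∀ x ∈ A, ∀ y ∈ A, ¬G1Adj x y) : IsMeagre A := by
  refine isMeagre_of_independent_of_exists_homeomorph hA hind fun U hU hne => ?_
  obtain ⟨x, n, hsub⟩ := exists_cylinder_subset hU hne
  exact ⟨_, hsub, PiNat.isOpen_cylinder _ x n, ⟨x, PiNat.self_mem_cylinder x n⟩, flipAt n,
    mapsTo_flipAt_cylinder x n, G1Adj_flipAt n⟩

/-- Every `G₁`-independent set with the Baire property is meagre; consequently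
`G₁` admits no proper colouring with countably many colour classes all having
the Baire property, and in particular its Borel chromatic number is
uncountable. -/
theorem G1_independent_baire_meagre_and_chromatic_uncountable :
    (∀ A : Set (ℕ → Bool), BaireMeasurableSet A →
      (∀ x ∈ A, ∀ y ∈ A, ¬G1Adj x y) → IsMeagre A) ∧
    (¬∃ c : (ℕ → Bool) → ℕ, (∀ x y, G1Adj x y → c x ≠ c y) ∧
        ∀ n, BaireMeasurableSet (c ⁻¹' {n})) ∧
    (¬∃ c : (ℕ → Bool) → ℕ, (∀ x y, G1Adj x y → c x ≠ c y) ∧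
        ∀ n, MeasurableSet (c ⁻¹' {n})) := by
  have no_baire_coloring : ¬∃ c : (ℕ → Bool) → ℕ, (∀ x y, G1Adj x y → c x ≠ c y) ∧
      ∀ n, BaireMeasurableSet (c ⁻¹' {n}) := by
    rintro ⟨c, hc, hB⟩
    obtain ⟨n, hn⟩ := exists_not_isMeagre_preimage_singleton c
    refine hn (G1_isMeagre_of_independent (hB n) ?_)
    rintro x rfl y hy hxy
    exact hc x y hxy hy.symm
  exact ⟨fun _ => G1_isMeagre_of_independent, no_baire_coloring,
    fun ⟨c, hc, hM⟩ => no_baire_coloring ⟨c, hc, fun n => (hM n).baireMeasurableSet⟩⟩
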